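/- Let P be a symmetric n×n matrix with non-negative integer entries and strictly positive diagonal entries, with tr(P) ≥ 2, and let G' = (V', E') be a finite connected simple graph with |V'| = tr(P). Define the n×n rational matrix M = (m_ij) by m_ii = p_ii / |V'| for all i and m_ij = p_ij / p_ii for all i ≠ j. Then M is an endorsement pattern over G' (i.e., there exists an endorsement configuration D_1, …, D_n on G' whose endorsed sets E_1, …, E_n satisfy |E_i| / |V'| = m_ii for all i and |E_i ∩ E_j| / |E_i| = m_ij for all i ≠ j) if and only if P is an intersection pattern (i.e., there exist finite sets S_1, …, S_n with |S_i ∩ S_j| = p_ij for all 1 ≤ i, j ≤ n). -/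

import Mathlib

/-
The rational conditions pin down exactly `|E_i| = p_ii` and `|E_i ∩ E_j| = p_ij`,
so the endorsed sets of an endorsement configuration realize `P`. Conversely, a realization of
`P` has union of size at most `tr(P) = |V'|`, so it can be copied into `V'`; since a connected
graph on at least two vertices has no isolated vertex, every vertex `v` can be endorsed by the
single pair `(u, v)` for a neighbour `u` of `v`, and then `E_i` is exactly the copied set.
-/

open Finset

/-- The set of vertices endorsed by an endorsement digraph `D`
(a finite set of ordered pairs of vertices): those vertices with
positive in-degree, i.e. the image of `D` under the second projection. -/
def endorsedSet {V : Type*} [DecidableEq V] (D : Finset (V × V)) : Finset V :=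
  D.image Prod.snd

def Finset.IsRealization {ι α : Type*} [DecidableEq α] (S : ι → Finset α)
    (P : Matrix ι ι ℕ) : Prop :=
  ∀ i j, #(S i ∩ S j) = P i j

namespace Finset.IsRealization

variable {ι α β : Type*} [DecidableEq α] [DecidableEq β] {S : ι → Finset α}
  {P : Matrix ι ι ℕ}

lemma card_eq (hS : IsRealization S P) (i : ι) : #(S i) = P i i := by
  simpa using hS i i

lemma map_iff (f : α ↪ β) : IsRealization (fun i => (S i).map f) P ↔ IsRealization S P := by
  simp only [IsRealization, ← map_inter, card_map]

lemma subtype (hS : IsRealization S P) {U : Finset α} (hSU : ∀ i, S i ⊆ U) :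
    IsRealization (fun i => (S i).subtype (· ∈ U)) P := by
  have hmap : (fun i => ((S i).subtype (· ∈ U)).map (Function.Embedding.subtype _)) = S :=
    funext fun i => subtype_map_of_mem fun _ hx => hSU i hx
  rw [← map_iff (Function.Embedding.subtype _), hmap]
  exact hS

lemma exists_of_sum_le_card [Fintype ι] [Fintype β] (hS : IsRealization S P)
    (hP : ∑ i, P i i ≤ Fintype.card β) :
    ∃ T : ι → Finset β, IsRealization T P := by
  set U := univ.biUnion S
  have hU : Fintype.card U ≤ Fintype.card β := calc
    Fintype.card U = #U := Fintype.card_coe U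
    _ ≤ ∑ i, #(S i) := card_biUnion_le
    _ = ∑ i, P i i := sum_congr rfl fun i _ => hS.card_eq i
    _ ≤ Fintype.card β := hP
  obtain ⟨f⟩ := Function.Embedding.nonempty_of_card_le hU
  exact ⟨_, (map_iff f).2 (hS.subtype fun i => subset_biUnion_of_mem S (mem_univ i))⟩

end Finset.IsRealization

lemma endorsedSet_image_pair {V : Type*} [DecidableEq V] (g : V → V) (E : Finset V) :
    endorsedSet (E.image fun v => (g v, v)) = E := by
  simp [endorsedSet, image_image, Function.comp_def]

lemma endorsement_ratios_iff_isRealization {ι β : Type*} [DecidableEq β]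
    {P : Matrix ι ι ℕ} (hdiag : ∀ i, 0 < P i i) {N : ℕ} (hN : N ≠ 0) {M : Matrix ι ι ℚ}
    (hMdiag : ∀ i, M i i = (P i i : ℚ) / N)
    (hMoff : ∀ i j, i ≠ j → M i j = (P i j : ℚ) / (P i i : ℚ)) (E : ι → Finset β) :
    ((∀ i, (#(E i) : ℚ) / N = M i i) ∧
      (∀ i j, i ≠ j → (#(E i ∩ E j) : ℚ) / #(E i) = M i j)) ↔
    IsRealization E P := by
  have hNQ : (N : ℚ) ≠ 0 := Nat.cast_ne_zero.2 hN
  have hPQ i : (P i i : ℚ) ≠ 0 := Nat.cast_ne_zero.2 (hdiag i).ne'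
  have hcard : (∀ i, (#(E i) : ℚ) / N = M i i) ↔ ∀ i, #(E i) = P i i := by
    simp only [hMdiag, div_left_inj' hNQ, Nat.cast_inj]
  rw [hcard]
  constructor
  · rintro ⟨hE, hEE⟩ i j
    rcases eq_or_ne i j with rfl | hij
    · simpa using hE i
    · have hratio := hEE i j hij
      rwa [hMoff i j hij, hE i, div_left_inj' (hPQ i), Nat.cast_inj] at hratio
  · intro hE
    refine ⟨hE.card_eq, fun i j hij => ?_⟩
    rw [hMoff i j hij, hE i j, hE.card_eq i]

theorem endorsement_pattern_iff_intersection_pattern_general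
    (n : ℕ) (P : Matrix (Fin n) (Fin n) ℕ)
    (hdiag : ∀ i, 0 < P i i) (htr : 2 ≤ ∑ i, P i i)
    (V' : Type*) [Fintype V'] [DecidableEq V'] (G' : SimpleGraph V')
    (hconn : G'.Connected) (hcard : Fintype.card V' = ∑ i, P i i)
    (M : Matrix (Fin n) (Fin n) ℚ)
    (hMdiag : ∀ i, M i i = (P i i : ℚ) / (Fintype.card V' : ℚ))
    (hMoff : ∀ i j, i ≠ j → M i j = (P i j : ℚ) / (P i i : ℚ)) :
    (∃ D : Fin n → Finset (V' × V'),
        (∀ i, ∀ p ∈ D i, G'.Adj p.1 p.2) ∧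
        (∀ i, ((endorsedSet (D i)).card : ℚ) / (Fintype.card V' : ℚ) = M i i) ∧
        (∀ i j, i ≠ j →
          ((endorsedSet (D i) ∩ endorsedSet (D j)).card : ℚ) /
            ((endorsedSet (D i)).card : ℚ) = M i j)) ↔
    (∃ (α : Type) (_ : DecidableEq α) (S : Fin n → Finset α),
        ∀ i j : Fin n, (S i ∩ S j).card = P i j) := by
  have hV : 1 < Fintype.card V' := by omega
  have hratios := endorsement_ratios_iff_isRealization (β := V') hdiag (by omega) hMdiag hMoff
  constructor
  · rintro ⟨D, -, hD⟩
    exact ⟨Fin (Fintype.card V'), inferInstance, _,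
      (IsRealization.map_iff (Fintype.equivFin V').toEmbedding).2 ((hratios _).1 hD)⟩
  · rintro ⟨α, _, S, hS⟩
    obtain ⟨E, hE⟩ := IsRealization.exists_of_sum_le_card (β := V') hS hcard.ge
    have : Nontrivial V' := Fintype.one_lt_card_iff_nontrivial.1 hV
    choose g hg using fun v => hconn.preconnected.exists_adj_of_nontrivial v
    refine ⟨fun i => (E i).image fun v => (g v, v), ?_, ?_⟩
    · simp only [mem_image]
      rintro i _ ⟨v, -, rfl⟩
      exact (hg v).symm
    · simpa only [endorsedSet_image_pair] using (hratios E).2 hE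

/-- Let `P` be a symmetric `n × n` matrix of non-negative integers with
strictly positive diagonal and `tr(P) ≥ 2`, and let `G'` be a finite connected
simple graph on `tr(P)` vertices.  The rational matrix `M` defined by
`m_ii = p_ii / |V'|` and `m_ij = p_ij / p_ii` (for `i ≠ j`) is an endorsement
pattern over `G'` if and only if `P` is an intersection pattern. -/
theorem endorsement_pattern_iff_intersection_pattern
    (n : ℕ) (P : Matrix (Fin n) (Fin n) ℕ) (hP : P.IsSymm)
    (hdiag : ∀ i, 0 < P i i) (htr : 2 ≤ ∑ i, P i i)
    (V' : Type*) [Fintype V'] [DecidableEq V'] (G' : SimpleGraph V')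
    (hconn : G'.Connected) (hcard : Fintype.card V' = ∑ i, P i i)
    (M : Matrix (Fin n) (Fin n) ℚ)
    (hMdiag : ∀ i, M i i = (P i i : ℚ) / (Fintype.card V' : ℚ))
    (hMoff : ∀ i j, i ≠ j → M i j = (P i j : ℚ) / (P i i : ℚ)) :
    (∃ D : Fin n → Finset (V' × V'),
        (∀ i, ∀ p ∈ D i, G'.Adj p.1 p.2) ∧
        (∀ i, ((endorsedSet (D i)).card : ℚ) / (Fintype.card V' : ℚ) = M i i) ∧
        (∀ i j, i ≠ j →
          ((endorsedSet (D i) ∩ endorsedSet (D j)).card : ℚ) /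
            ((endorsedSet (D i)).card : ℚ) = M i j)) ↔
    (∃ (α : Type) (_ : DecidableEq α) (S : Fin n → Finset α),
        ∀ i j : Fin n, (S i ∩ S j).card = P i j) :=
  endorsement_pattern_iff_intersection_pattern_general n P hdiag htr V' G' hconn hcard M hMdiag
    hMoff
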